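/- Let G be a finite connected graph on V with |V| = n, f, g : V → ℝ, and let p be the uniform distribution on V. Then (∑_{v,w} |W_f(v,w) − W_g(v,w)|^q p(v)p(w))^{1/q} ≤ n^{1/q} · (∑_u |f(u) − g(u)|^q p(u))^{1/q}, where W_f, W_g are the minimax path matrices of f and g. -/

import Mathlib

open Finset

/-- The maximum value of `f` along the support of a walk. -/
def walkMax {V : Type*} (G : SimpleGraph V) (f : V → ℝ) {v w : V}
    (p : G.Walk v w) : ℝ :=
  p.support.foldr (fun u r => max (f u) r) (f v)

/-- The minimax path matrix `W_f(v,w)`: the minimum over edge paths from `v`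
to `w` of the maximum `f`-value along the path. -/
noncomputable def minimaxW {V : Type*} (G : SimpleGraph V) (f : V → ℝ)
    (v w : V) : ℝ :=
  sInf {x | ∃ p : G.Walk v w, x = walkMax G f p}

/-!
`f ↦ W_f(v, w)` is a minimum of maxima of values of `f`, hence monotone and commuting with
adding constants; so it is `1`-Lipschitz for the sup norm and
`‖W_f - W_g‖_{L^q(p ⊗ p)} ≤ ‖f - g‖_∞`. For the uniform `p` the right-hand side equals
`(∑ u, |f u - g u| ^ q) ^ (1 / q)`, which dominates `‖f - g‖_∞`.
-/

section WalkMax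

variable {V : Type*}

lemma le_foldr_max (f : V → ℝ) (l : List V) (b : ℝ) :
    b ≤ l.foldr (fun u r => max (f u) r) b := by
  induction l with
  | nil => exact le_rfl
  | cons a l ih => exact ih.trans (le_max_right _ _)

lemma foldr_max_le_add {f g : V → ℝ} {M : ℝ} (h : ∀ u, f u ≤ g u + M) (l : List V)
    {b c : ℝ} (hbc : b ≤ c + M) :
    l.foldr (fun u r => max (f u) r) b ≤ l.foldr (fun u r => max (g u) r) c + M := by
  induction l with
  | nil => exact hbc
  | cons a l ih =>
    rw [List.foldr_cons, List.foldr_cons, ← max_add_add_right]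
    exact max_le_max (h a) ih

variable (G : SimpleGraph V)

lemma le_walkMax (f : V → ℝ) {v w : V} (p : G.Walk v w) : f v ≤ walkMax G f p :=
  le_foldr_max f _ _

lemma walkMax_le_add {f g : V → ℝ} {M : ℝ} (h : ∀ u, f u ≤ g u + M) {v w : V}
    (p : G.Walk v w) : walkMax G f p ≤ walkMax G g p + M :=
  foldr_max_le_add h _ (h v)

lemma minimaxW_le_add {f g : V → ℝ} {M : ℝ} (h : ∀ u, f u ≤ g u + M) {v w : V}
    (hvw : G.Reachable v w) : minimaxW G f v w ≤ minimaxW G g v w + M := by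
  obtain ⟨p₀⟩ := hvw
  have hbdd : BddBelow {x | ∃ p : G.Walk v w, x = walkMax G f p} :=
    ⟨f v, by rintro x ⟨p, rfl⟩; exact le_walkMax G f p⟩
  rw [minimaxW, minimaxW, ← sub_le_iff_le_add]
  refine le_csInf ⟨_, p₀, rfl⟩ ?_
  rintro x ⟨p, rfl⟩
  rw [sub_le_iff_le_add]
  exact (csInf_le hbdd ⟨p, rfl⟩).trans (walkMax_le_add G h p)

lemma abs_minimaxW_sub_le {f g : V → ℝ} {M : ℝ} (h : ∀ u, |f u - g u| ≤ M) {v w : V}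
    (hvw : G.Reachable v w) : |minimaxW G f v w - minimaxW G g v w| ≤ M := by
  rw [abs_sub_le_iff, sub_le_iff_le_add', sub_le_iff_le_add']
  constructor
  · refine minimaxW_le_add G (fun u => ?_) hvw
    linarith [(abs_sub_le_iff.mp (h u)).1]
  · refine minimaxW_le_add G (fun u => ?_) hvw
    linarith [(abs_sub_le_iff.mp (h u)).2]

end WalkMax

section PowerMean

variable {ι : Type*} {s : Finset ι} {a : ι → ℝ} {q : ℝ}

lemma rpow_sum_rpow_mul_le_of_le {w : ι → ℝ} {M : ℝ} (hq : 0 < q) (ha : ∀ i ∈ s, 0 ≤ a i)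
    (haM : ∀ i ∈ s, a i ≤ M) (hw : ∀ i ∈ s, 0 ≤ w i) (hw₁ : ∑ i ∈ s, w i = 1)
    (hM : 0 ≤ M) : (∑ i ∈ s, a i ^ q * w i) ^ (1 / q) ≤ M := by
  have hsum : ∑ i ∈ s, a i ^ q * w i ≤ M ^ q := by
    calc ∑ i ∈ s, a i ^ q * w i ≤ ∑ i ∈ s, M ^ q * w i :=
          sum_le_sum fun i hi => mul_le_mul_of_nonneg_right
            (Real.rpow_le_rpow (ha i hi) (haM i hi) hq.le) (hw i hi)
      _ = M ^ q := by rw [← mul_sum, hw₁, mul_one]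
  calc (∑ i ∈ s, a i ^ q * w i) ^ (1 / q) ≤ (M ^ q) ^ (1 / q) :=
        Real.rpow_le_rpow (sum_nonneg fun i hi => mul_nonneg
          (Real.rpow_nonneg (ha i hi) q) (hw i hi)) hsum (by positivity)
    _ = M := by rw [← Real.rpow_mul hM, mul_one_div_cancel hq.ne', Real.rpow_one]

lemma le_rpow_sum_rpow (hq : 0 < q) (ha : ∀ i ∈ s, 0 ≤ a i) {i : ι} (hi : i ∈ s) :
    a i ≤ (∑ j ∈ s, a j ^ q) ^ (1 / q) := by
  calc a i = (a i ^ q) ^ (1 / q) := by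
        rw [← Real.rpow_mul (ha i hi), mul_one_div_cancel hq.ne', Real.rpow_one]
    _ ≤ (∑ j ∈ s, a j ^ q) ^ (1 / q) :=
        Real.rpow_le_rpow (Real.rpow_nonneg (ha i hi) q)
          (single_le_sum (fun j hj => Real.rpow_nonneg (ha j hj) q) hi) (by positivity)

end PowerMean

/-- GW-type stability bound for the uniform distribution with the
improved constant `n^{1/q}`. -/
theorem minimaxW_Lq_stability_uniform {V : Type*} [Fintype V] [Nonempty V]
    (G : SimpleGraph V) (hG : G.Connected) (f g : V → ℝ) (q : ℝ) (hq : 1 ≤ q)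
    (p : V → ℝ) (hp : ∀ v : V, p v = 1 / (Fintype.card V : ℝ)) :
    (∑ v, ∑ w, |minimaxW G f v w - minimaxW G g v w| ^ q * (p v * p w)) ^ (1 / q) ≤
      (Fintype.card V : ℝ) ^ ((1 : ℝ) / q) *
        (∑ u, |f u - g u| ^ q * p u) ^ (1 / q) := by
  have hq₀ : 0 < q := by linarith
  have hn : (0 : ℝ) < Fintype.card V := by exact_mod_cast Fintype.card_pos
  have hp₀ : ∀ v, 0 ≤ p v := fun v => by rw [hp v]; positivity
  have hp₁ : ∑ v, p v = 1 := by simp only [hp, sum_const, card_univ, nsmul_eq_mul]; field_simp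
  obtain ⟨u₀, -, hu₀⟩ := exists_max_image univ (fun u => |f u - g u|) univ_nonempty
  have hW : ∀ v w, |minimaxW G f v w - minimaxW G g v w| ≤ |f u₀ - g u₀| := fun v w =>
    abs_minimaxW_sub_le G (fun u => hu₀ u (mem_univ u)) (hG.preconnected v w)
  rw [← Fintype.sum_prod_type' (f := fun v w =>
    |minimaxW G f v w - minimaxW G g v w| ^ q * (p v * p w))]
  calc _ ≤ |f u₀ - g u₀| :=
        rpow_sum_rpow_mul_le_of_le hq₀ (fun _ _ => abs_nonneg _) (fun x _ => hW x.1 x.2)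
          (fun x _ => mul_nonneg (hp₀ x.1) (hp₀ x.2))
          (by rw [Fintype.sum_prod_type' (fun v w => p v * p w), ← sum_mul_sum, hp₁, one_mul])
          (abs_nonneg _)
    _ ≤ (∑ u, |f u - g u| ^ q) ^ (1 / q) :=
        le_rpow_sum_rpow (a := fun u => |f u - g u|) hq₀ (fun _ _ => abs_nonneg _)
          (mem_univ u₀)
    _ = _ := by
        simp only [hp, ← sum_mul]
        rw [← Real.mul_rpow hn.le (by positivity), mul_one_div, mul_div_cancel₀ _ hn.ne']
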